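/- arXiv:2103.08218 — 6 statements merged into one kernel-verified Lean document; each statement's English description precedes it below -/
import Mathlib

section
/- (Tikhonov bias bound under the source condition with μ = 1/2.) Let α > 0, w ∈ Y, x† = A* w, y = A x†, and let x_α = (A*A + αI)⁻¹ A* y be the noise-free Tikhonov approximation. Then ‖x_α − x†‖ ≤ (√α / 2) · ‖w‖. -/
/-- (Tikhonov bias bound under the source condition with `μ = 1/2`.) For
`x† = A* w`, `y = A x†` and the noise-free Tikhonov approximation
`x_α = (A*A + αI)⁻¹ A* y` (characterized by `(A*A + αI) x_α = A* y`) one has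
`‖x_α − x†‖ ≤ (√α / 2) ‖w‖`. -/
theorem tikhonov_bias_bound_half_source_condition
    {𝕜 X Y : Type*} [RCLike 𝕜]
    [NormedAddCommGroup X] [InnerProductSpace 𝕜 X] [CompleteSpace X]
    [NormedAddCommGroup Y] [InnerProductSpace 𝕜 Y] [CompleteSpace Y]
    (A : X →L[𝕜] Y) (α : ℝ) (hα : 0 < α)
    (w : Y) (xdag : X) (hxdag : xdag = ContinuousLinearMap.adjoint A w)
    (y : Y) (hy : y = A xdag) (xα : X)
    (hxα : ContinuousLinearMap.adjoint A (A xα) + (α : 𝕜) • xα =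
      ContinuousLinearMap.adjoint A y) :
    ‖xα - xdag‖ ≤ (Real.sqrt α / 2) * ‖w‖ := by
  set e := xα - xdag with he
  have h1 : ContinuousLinearMap.adjoint A (A xα) + (α : 𝕜) • xα
      = ContinuousLinearMap.adjoint A (A xdag) := by rw [hxα, hy]
  have heq : ContinuousLinearMap.adjoint A (A e) + (α : 𝕜) • e
      = (-(α : 𝕜)) • xdag := by
    rw [he]
    simp only [map_sub, smul_sub]
    rw [eq_sub_of_add_eq h1]
    simp only [neg_smul]
    abel
  -- take inner product with e
  have hinner : RCLike.re (inner (𝕜 := 𝕜)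
      (ContinuousLinearMap.adjoint A (A e) + (α : 𝕜) • e) e)
      = RCLike.re (inner (𝕜 := 𝕜) ((-(α : 𝕜)) • xdag) e) := by rw [heq]
  have hL : RCLike.re (inner (𝕜 := 𝕜)
      (ContinuousLinearMap.adjoint A (A e) + (α : 𝕜) • e) e)
      = ‖A e‖ ^ 2 + α * ‖e‖ ^ 2 := by
    rw [inner_add_left, ContinuousLinearMap.adjoint_inner_left, inner_smul_left]
    simp [inner_self_eq_norm_sq, RCLike.conj_ofReal, RCLike.mul_re, RCLike.ofReal_re,
      RCLike.ofReal_im, inner_self_im]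
  have hR : RCLike.re (inner (𝕜 := 𝕜) ((-(α : 𝕜)) • xdag) e)
      = -(α * RCLike.re (inner (𝕜 := 𝕜) w (A e))) := by
    rw [hxdag, inner_smul_left, ContinuousLinearMap.adjoint_inner_left]
    simp [RCLike.conj_ofReal]
  have hbound : -(RCLike.re (inner (𝕜 := 𝕜) w (A e))) ≤ ‖w‖ * ‖A e‖ := by
    calc -(RCLike.re (inner (𝕜 := 𝕜) w (A e)))
        ≤ |RCLike.re (inner (𝕜 := 𝕜) w (A e))| := neg_le_abs _
      _ ≤ ‖(inner (𝕜 := 𝕜) w (A e) : 𝕜)‖ := RCLike.abs_re_le_norm _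
      _ ≤ ‖w‖ * ‖A e‖ := norm_inner_le_norm _ _
  have key : ‖A e‖ ^ 2 + α * ‖e‖ ^ 2 ≤ α * (‖w‖ * ‖A e‖) := by
    rw [hL, hR] at hinner
    rw [hinner]
    rw [← mul_neg]
    exact mul_le_mul_of_nonneg_left hbound hα.le
  have hs : Real.sqrt α ^ 2 = α := Real.sq_sqrt hα.le
  have hs0 : 0 ≤ Real.sqrt α := Real.sqrt_nonneg α
  have h2 : ‖e‖ ^ 2 ≤ α * ‖w‖ ^ 2 / 4 := by
    nlinarith [sq_nonneg (‖A e‖ - α * ‖w‖ / 2)]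
  calc ‖e‖ = Real.sqrt (‖e‖ ^ 2) := (Real.sqrt_sq (norm_nonneg e)).symm
    _ ≤ Real.sqrt (α * ‖w‖ ^ 2 / 4) := Real.sqrt_le_sqrt h2
    _ = Real.sqrt α / 2 * ‖w‖ := by
        rw [show α * ‖w‖ ^ 2 / 4 = (Real.sqrt α / 2 * ‖w‖) ^ 2 by
          rw [mul_pow, div_pow, hs]; ring]
        exact Real.sqrt_sq (by positivity)
end

section
/- (Tikhonov bias bound under the source condition with μ = 1, the saturation case.) Let α > 0, w ∈ X, x† = (A* ∘ A) w, y = A x†, and let x_α = (A*A + αI)⁻¹ A* y be the noise-free Tikhonov approximation. Then ‖x_α − x†‖ ≤ α · ‖w‖. -/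
/-- (Tikhonov bias bound under the source condition with `μ = 1`, the saturation
case.) For `x† = (A* ∘ A) w`, `y = A x†` and the noise-free Tikhonov
approximation `x_α = (A*A + αI)⁻¹ A* y` (characterized by
`(A*A + αI) x_α = A* y`) one has `‖x_α − x†‖ ≤ α ‖w‖`. -/
theorem tikhonov_bias_bound_one_source_condition
    {𝕜 X Y : Type*} [RCLike 𝕜]
    [NormedAddCommGroup X] [InnerProductSpace 𝕜 X] [CompleteSpace X]
    [NormedAddCommGroup Y] [InnerProductSpace 𝕜 Y] [CompleteSpace Y]
    (A : X →L[𝕜] Y) (α : ℝ) (hα : 0 < α)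
    (w : X) (xdag : X) (hxdag : xdag = (ContinuousLinearMap.adjoint A ∘L A) w)
    (y : Y) (hy : y = A xdag) (xα : X)
    (hxα : ContinuousLinearMap.adjoint A (A xα) + (α : 𝕜) • xα =
      ContinuousLinearMap.adjoint A y) :
    ‖xα - xdag‖ ≤ α * ‖w‖ := by
  set B := ContinuousLinearMap.adjoint A with hB
  set e := xα - xdag with he
  have hBAw : B (A w) = xdag := by rw [hxdag]; rfl
  have h2 : B (A xα) = B (A xdag) - (α : 𝕜) • xα := by
    rw [hy] at hxα; rw [← hxα]; abel
  have key : B (A (e + (α : 𝕜) • w)) = -((α : 𝕜) • e) := by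
    rw [he, map_add, map_add, map_sub, map_sub, map_smul, map_smul, hBAw, h2]
    module
  set u := e + (α : 𝕜) • w with hu
  have h0 : (0:ℝ) ≤ RCLike.re (inner (𝕜 := 𝕜) (B (A u)) u) := by
    rw [hB, ContinuousLinearMap.adjoint_inner_left]
    exact inner_self_nonneg
  rw [key] at h0
  have hexp : RCLike.re (inner (𝕜 := 𝕜) (-((α : 𝕜) • e)) u) =
      -(α * (‖e‖ ^ 2 + α * RCLike.re (inner (𝕜 := 𝕜) e w))) := by
    rw [hu]
    simp [inner_neg_left, inner_smul_left, inner_add_right, inner_smul_right,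
      RCLike.conj_ofReal, inner_self_eq_norm_sq]
    ring
  rw [hexp] at h0
  -- so ‖e‖^2 + α * re⟪e,w⟫ ≤ 0
  have h3 : ‖e‖ ^ 2 + α * RCLike.re (inner (𝕜 := 𝕜) e w) ≤ 0 := by
    nlinarith
  have h4 : -RCLike.re (inner (𝕜 := 𝕜) e w) ≤ ‖e‖ * ‖w‖ := by
    have h := re_inner_le_norm (𝕜 := 𝕜) (-e) w
    simpa using h
  have h5 : ‖e‖ ^ 2 ≤ α * (‖e‖ * ‖w‖) := by nlinarith
  rcases eq_or_lt_of_le (norm_nonneg e) with h | h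
  · rw [← h]; positivity
  · nlinarith
end

section
/- (Order-optimal convergence rate δ^{1/2} for Tikhonov regularization under the source condition with μ = 1/2 and the a-priori choice α = δ.) Let δ > 0, w ∈ Y, x† = A* w, y = A x†, and let y^δ ∈ Y satisfy ‖y − y^δ‖ ≤ δ. Set α = δ and x_α^δ = (A*A + αI)⁻¹ A* y^δ. Then ‖x_α^δ − x†‖ ≤ ((‖w‖ + 1)/2) · δ^{1/2}. -/
/-- (Order-optimal convergence rate `δ^{1/2}` for Tikhonov regularization under
the source condition with `μ = 1/2` and the a-priori choice `α = δ`.) For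
`x† = A* w`, `y = A x†`, `‖y − y^δ‖ ≤ δ`, `α = δ` and
`x_α^δ = (A*A + αI)⁻¹ A* y^δ` (characterized by `(A*A + αI) x_α^δ = A* y^δ`)
one has `‖x_α^δ − x†‖ ≤ ((‖w‖ + 1)/2) δ^{1/2}`. -/
theorem tikhonov_rate_sqrt_delta_half_source_condition
    {𝕜 X Y : Type*} [RCLike 𝕜]
    [NormedAddCommGroup X] [InnerProductSpace 𝕜 X] [CompleteSpace X]
    [NormedAddCommGroup Y] [InnerProductSpace 𝕜 Y] [CompleteSpace Y]
    (A : X →L[𝕜] Y) (δ : ℝ) (hδ : 0 < δ)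
    (w : Y) (xdag : X) (hxdag : xdag = ContinuousLinearMap.adjoint A w)
    (y : Y) (hy : y = A xdag) (yδ : Y) (hnoise : ‖y - yδ‖ ≤ δ)
    (α : ℝ) (hαdef : α = δ) (xαδ : X)
    (hxαδ : ContinuousLinearMap.adjoint A (A xαδ) + (α : 𝕜) • xαδ =
      ContinuousLinearMap.adjoint A yδ) :
    ‖xαδ - xdag‖ ≤ ((‖w‖ + 1) / 2) * δ ^ ((1 : ℝ) / 2) := by
  subst hαdef hxdag hy
  set B := ContinuousLinearMap.adjoint A with hB
  set e := xαδ - B w with he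
  set v := yδ - A (B w) - (α : 𝕜) • w with hv
  have hAe : A e = A xαδ - A (B w) := by simp [he, map_sub]
  have heq : B (A e) + (α : 𝕜) • e = B v := by
    simp only [hAe, map_sub, he, smul_sub, hv, map_smul]
    rw [← hxαδ]; abel
  have h1 : RCLike.re (inner 𝕜 e (B (A e) + (α : 𝕜) • e))
      = ‖A e‖ ^ 2 + α * ‖e‖ ^ 2 := by
    rw [inner_add_right, inner_smul_right, ContinuousLinearMap.adjoint_inner_right,
      map_add, RCLike.re_ofReal_mul, inner_self_eq_norm_sq, inner_self_eq_norm_sq]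
  have h2 : RCLike.re (inner 𝕜 e (B v)) ≤ ‖A e‖ * ‖v‖ := by
    rw [ContinuousLinearMap.adjoint_inner_right]
    exact re_inner_le_norm (𝕜 := 𝕜) _ _
  have hvnorm : ‖v‖ ≤ α + α * ‖w‖ := by
    have h3 : ‖v‖ ≤ ‖yδ - A (B w)‖ + ‖(α : 𝕜) • w‖ := norm_sub_le _ _
    have h4 : ‖yδ - A (B w)‖ = ‖A (B w) - yδ‖ := norm_sub_rev _ _
    have h5 : ‖(α : 𝕜) • w‖ = α * ‖w‖ := by
      rw [norm_smul, RCLike.norm_ofReal, abs_of_pos hδ]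
    rw [h4, h5] at h3
    linarith [hnoise]
  have hkey : ‖A e‖ ^ 2 + α * ‖e‖ ^ 2 ≤ ‖A e‖ * (α + α * ‖w‖) := by
    rw [← h1, heq]
    calc RCLike.re (inner 𝕜 e (B v)) ≤ ‖A e‖ * ‖v‖ := h2
      _ ≤ ‖A e‖ * (α + α * ‖w‖) := by
          exact mul_le_mul_of_nonneg_left hvnorm (norm_nonneg _)
  have hsq : ‖e‖ ^ 2 ≤ ((‖w‖ + 1) / 2 * α ^ ((1 : ℝ) / 2)) ^ 2 := by
    have hs : α ^ ((1 : ℝ) / 2) * α ^ ((1 : ℝ) / 2) = α := by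
      rw [← Real.rpow_add hδ]; norm_num
    have h6 : α * ‖e‖ ^ 2 ≤ α ^ 2 * (1 + ‖w‖) ^ 2 / 4 := by
      nlinarith [sq_nonneg (‖A e‖ - α * (1 + ‖w‖) / 2)]
    have h7 : ‖e‖ ^ 2 ≤ α * (1 + ‖w‖) ^ 2 / 4 := by
      have := (mul_le_mul_iff_right₀ hδ).mp (by nlinarith : α * ‖e‖ ^ 2 ≤ α * (α * (1 + ‖w‖) ^ 2 / 4))
      linarith
    calc ‖e‖ ^ 2 ≤ α * (1 + ‖w‖) ^ 2 / 4 := h7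
      _ = ((‖w‖ + 1) / 2 * α ^ ((1 : ℝ) / 2)) ^ 2 := by
          have h8 : ((‖w‖ + 1) / 2 * α ^ ((1 : ℝ) / 2)) ^ 2
              = (‖w‖ + 1) ^ 2 / 4 * (α ^ ((1 : ℝ) / 2) * α ^ ((1 : ℝ) / 2)) := by ring
          rw [h8, hs]; ring
  have hc : 0 ≤ (‖w‖ + 1) / 2 * α ^ ((1 : ℝ) / 2) := by
    have := Real.rpow_nonneg hδ.le ((1 : ℝ) / 2)
    positivity
  have hfin := Real.sqrt_le_sqrt hsq
  rwa [Real.sqrt_sq (norm_nonneg _), Real.sqrt_sq hc] at hfin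
end

section
/- (Saturation rate δ^{2/3} for Tikhonov regularization under the source condition with μ = 1 and the a-priori choice α = δ^{2/3}.) Let δ > 0, w ∈ X, x† = (A* ∘ A) w, y = A x†, and let y^δ ∈ Y satisfy ‖y − y^δ‖ ≤ δ. Set α = δ^{2/3} and x_α^δ = (A*A + αI)⁻¹ A* y^δ. Then ‖x_α^δ − x†‖ ≤ (‖w‖ + 1/2) · δ^{2/3}. -/
set_option maxHeartbeats 1000000

open scoped InnerProductSpace

/-- A coercive bounded operator on a Hilbert space is surjective. -/
theorem tikhonov_aux_surjective {𝕜 X : Type*} [RCLike 𝕜]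
    [NormedAddCommGroup X] [InnerProductSpace 𝕜 X] [CompleteSpace X]
    (B : X →L[𝕜] X) {c : ℝ} (hc : 0 < c)
    (hcoer : ∀ x : X, c * ‖x‖ ^ 2 ≤ RCLike.re (⟪B x, x⟫_𝕜)) :
    Function.Surjective B := by
  have hb : ∀ x : X, ‖x‖ ≤ (c⁻¹).toNNReal * ‖B x‖ := by
    intro x
    have h1 : c * ‖x‖ ^ 2 ≤ ‖B x‖ * ‖x‖ :=
      (hcoer x).trans ((RCLike.re_le_norm _).trans (norm_inner_le_norm _ _))
    have hcoe : ((c⁻¹).toNNReal : ℝ) = c⁻¹ := Real.coe_toNNReal _ (by positivity)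
    rw [hcoe]
    rcases eq_or_lt_of_le (norm_nonneg x) with h0 | h0
    · rw [← h0]; positivity
    · have h2 : c * ‖x‖ ≤ ‖B x‖ := by nlinarith
      rw [inv_mul_eq_div, le_div_iff₀ hc]
      nlinarith
  have hanti := B.antilipschitz_of_bound hb
  haveI : CompleteSpace (LinearMap.range (B : X →ₗ[𝕜] X)) := by exact hanti.completeSpace_range_clm
  have horth : (LinearMap.range (B : X →ₗ[𝕜] X))ᗮ = ⊥ := by
    rw [Submodule.eq_bot_iff]
    intro x hx
    have h0 : ⟪B x, x⟫_𝕜 = 0 :=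
      (Submodule.mem_orthogonal _ x).mp hx (B x) ⟨x, rfl⟩
    have hx2 : c * ‖x‖ ^ 2 ≤ 0 := by simpa [h0] using hcoer x
    have hxn : ‖x‖ = 0 := by
      by_contra h
      have h1 : 0 < ‖x‖ := lt_of_le_of_ne (norm_nonneg x) (Ne.symm h)
      nlinarith [mul_pos hc (pow_pos h1 2)]
    exact norm_eq_zero.mp hxn
  have htop : LinearMap.range (B : X →ₗ[𝕜] X) = ⊤ := Submodule.orthogonal_eq_bot_iff.mp horth
  exact LinearMap.range_eq_top.mp htop

/-- (Saturation rate `δ^{2/3}` for Tikhonov regularization under the source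
condition with `μ = 1` and the a-priori choice `α = δ^{2/3}`.) For
`x† = (A* ∘ A) w`, `y = A x†`, `‖y − y^δ‖ ≤ δ`, `α = δ^{2/3}` and
`x_α^δ = (A*A + αI)⁻¹ A* y^δ` (characterized by `(A*A + αI) x_α^δ = A* y^δ`)
one has `‖x_α^δ − x†‖ ≤ (‖w‖ + 1/2) δ^{2/3}`. -/
theorem tikhonov_saturation_rate_two_thirds
    {𝕜 X Y : Type*} [RCLike 𝕜]
    [NormedAddCommGroup X] [InnerProductSpace 𝕜 X] [CompleteSpace X]
    [NormedAddCommGroup Y] [InnerProductSpace 𝕜 Y] [CompleteSpace Y]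
    (A : X →L[𝕜] Y) (δ : ℝ) (hδ : 0 < δ)
    (w : X) (xdag : X) (hxdag : xdag = (ContinuousLinearMap.adjoint A ∘L A) w)
    (y : Y) (hy : y = A xdag) (yδ : Y) (hnoise : ‖y - yδ‖ ≤ δ)
    (α : ℝ) (hαdef : α = δ ^ ((2 : ℝ) / 3)) (xαδ : X)
    (hxαδ : ContinuousLinearMap.adjoint A (A xαδ) + (α : 𝕜) • xαδ =
      ContinuousLinearMap.adjoint A yδ) :
    ‖xαδ - xdag‖ ≤ (‖w‖ + 1 / 2) * δ ^ ((2 : ℝ) / 3) := by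
  set A' := ContinuousLinearMap.adjoint A with hA'
  have hα : 0 < α := hαdef ▸ Real.rpow_pos_of_pos hδ _
  set B : X →L[𝕜] X := A' ∘L A + (α : 𝕜) • ContinuousLinearMap.id 𝕜 X with hB
  have hBapp : ∀ x : X, B x = A' (A x) + (α : 𝕜) • x := fun x => rfl
  have hre : ∀ x : X, RCLike.re (⟪B x, x⟫_𝕜) = ‖A x‖ ^ 2 + α * ‖x‖ ^ 2 := by
    intro x
    rw [hBapp, inner_add_left, inner_smul_left, ContinuousLinearMap.adjoint_inner_left,
      map_add, RCLike.conj_ofReal]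
    simp [inner_self_eq_norm_sq, RCLike.re_ofReal_mul]
  have hcoer : ∀ x : X, α * ‖x‖ ^ 2 ≤ RCLike.re (⟪B x, x⟫_𝕜) := by
    intro x
    rw [hre x]
    nlinarith [sq_nonneg ‖A x‖]
  obtain ⟨u, hu⟩ := tikhonov_aux_surjective B hα hcoer (A' (yδ - y))
  set v : X := xαδ - xdag - u with hv
  -- operator identities
  have hBxαδ : B xαδ = A' yδ := by rw [hBapp]; exact hxαδ
  have hBxdag : B xdag = A' y + (α : 𝕜) • A' (A w) := by
    rw [hBapp, ← hy, hxdag]; rfl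
  have hBv : B v = -((α : 𝕜) • A' (A w)) := by
    rw [hv, map_sub, map_sub, hBxαδ, hBxdag, hu, map_sub]
    abel
  -- bound on u
  have hure : ‖A u‖ ^ 2 + α * ‖u‖ ^ 2 ≤ δ * ‖A u‖ := by
    have h1 := hre u
    rw [hu] at h1
    have h2 : RCLike.re (⟪A' (yδ - y), u⟫_𝕜) = RCLike.re (⟪yδ - y, A u⟫_𝕜) := by
      rw [ContinuousLinearMap.adjoint_inner_left]
    have h3 : RCLike.re (⟪yδ - y, A u⟫_𝕜) ≤ δ * ‖A u‖ := by
      refine ((RCLike.re_le_norm _).trans ((norm_inner_le_norm _ _).trans ?_))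
      have : ‖yδ - y‖ ≤ δ := by rwa [norm_sub_rev] at hnoise
      exact mul_le_mul_of_nonneg_right this (norm_nonneg _)
    linarith [h1 ▸ (h2 ▸ h3)]
  have huB : α * ‖u‖ ^ 2 ≤ δ ^ 2 / 4 := by nlinarith [sq_nonneg (‖A u‖ - δ / 2)]
  -- bound on v via g = v + α • w
  set g : X := v + (α : 𝕜) • w with hg
  have hBg : B g = ((α : 𝕜) ^ 2) • w := by
    rw [hg, map_add, hBv, map_smul, hBapp w, smul_add, smul_smul]
    rw [← sq]
    abel
  have hαv : (α : 𝕜) • v = -(A' (A g)) := by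
    have h1 : A' (A g) + (α : 𝕜) • g = ((α : 𝕜) ^ 2) • w := by
      rw [← hBapp]; exact hBg
    have h2 : (α : 𝕜) • v = (α : 𝕜) • g - ((α : 𝕜) ^ 2) • w := by
      rw [hg, smul_add, smul_smul, ← sq]; abel
    rw [h2, ← h1]; abel
  have hnv : α * ‖v‖ = ‖A' (A g)‖ := by
    have hh : ‖(α : 𝕜) • v‖ = ‖A' (A g)‖ := by rw [hαv, norm_neg]
    rw [← hh, norm_smul, RCLike.norm_ofReal, abs_of_pos hα]
  have hkey : ‖A' (A g)‖ ≤ α ^ 2 * ‖w‖ := by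
    have hexp : ‖B g‖ ^ 2 = ‖A' (A g)‖ ^ 2 + 2 * (α * ‖A g‖ ^ 2) + ‖(α : 𝕜) • g‖ ^ 2 := by
      rw [hBapp, norm_add_sq (𝕜 := 𝕜)]
      congr 2
      rw [inner_smul_right, ContinuousLinearMap.adjoint_inner_left]
      simp [inner_self_eq_norm_sq, RCLike.re_ofReal_mul]
    have hBgn : ‖B g‖ = α ^ 2 * ‖w‖ := by
      rw [hBg, norm_smul, ← RCLike.ofReal_pow, RCLike.norm_ofReal, abs_of_pos (by positivity)]
    have h1 : ‖A' (A g)‖ ^ 2 ≤ ‖B g‖ ^ 2 := by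
      rw [hexp]; nlinarith [sq_nonneg ‖A g‖, sq_nonneg ‖(α : 𝕜) • g‖]
    rw [hBgn] at h1
    nlinarith [norm_nonneg (A' (A g)), norm_nonneg w, sq_nonneg (α ^ 2 * ‖w‖),
      mul_nonneg (sq_nonneg α) (norm_nonneg w)]
  have hvb : ‖v‖ ≤ α * ‖w‖ := by
    have : α * ‖v‖ ≤ α * (α * ‖w‖) := by rw [hnv]; nlinarith
    exact le_of_mul_le_mul_left this hα
  -- rpow arithmetic
  set t : ℝ := δ ^ ((2 : ℝ) / 3) with ht
  have htpos : 0 < t := Real.rpow_pos_of_pos hδ _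
  have ht3 : t ^ 3 = δ ^ 2 := by
    rw [ht, ← Real.rpow_natCast (δ ^ ((2 : ℝ) / 3)) 3, ← Real.rpow_mul hδ.le,
      ← Real.rpow_natCast δ 2]
    norm_num
  have hub : ‖u‖ ≤ t / 2 := by
    have h1 : t * ‖u‖ ^ 2 ≤ t ^ 3 / 4 := by rw [ht3]; rw [hαdef] at huB; exact huB
    have h2 : ‖u‖ ^ 2 ≤ t ^ 2 / 4 := by
      have := (mul_le_mul_iff_right₀ htpos).mp (by nlinarith : t * ‖u‖ ^ 2 ≤ t * (t ^ 2 / 4))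
      exact this
    nlinarith [norm_nonneg u, htpos]
  have hsplit : xαδ - xdag = u + v := by rw [hv]; abel
  calc ‖xαδ - xdag‖ = ‖u + v‖ := by rw [hsplit]
    _ ≤ ‖u‖ + ‖v‖ := norm_add_le _ _
    _ ≤ t / 2 + t * ‖w‖ := by
        have : α * ‖w‖ = t * ‖w‖ := by rw [hαdef, ht]
        linarith [hvb, this ▸ hvb]
    _ = (‖w‖ + 1 / 2) * t := by ring
end

section
/- (Error decomposition for higher-order Tikhonov regularization, diagonal form.) Let κ ≥ 0 and 0 ≤ μ ≤ κ + 1 be real numbers, ρ ≥ 0, δ ≥ 0 and α > 0. Let w : ℕ → ℝ satisfy ∑_k w_k² ≤ ρ², set a_k = σ_k^{2μ} w_k and exact data y_k = σ_k a_k, and let y^δ : ℕ → ℝ be square-summable with ∑_k (y^δ_k − y_k)² ≤ δ². Define the higher-order Tikhonov approximation x_α^δ by its coefficients (x_α^δ)_k = σ_k^{2κ+1} y^δ_k / (σ_k^{2κ+2} + α). Then (∑_k ((x_α^δ)_k − a_k)²)^{1/2} ≤ ρ · α^{μ/(κ+1)} + δ · α^{−1/(2κ+2)}. -/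
private lemma aux1 (t α θ : ℝ) (ht : 0 < t) (hα : 0 < α) (hθ0 : 0 ≤ θ) (hθ1 : θ ≤ 1) :
    t ^ θ * α / (t + α) ≤ α ^ θ := by
  rw [div_le_iff₀ (by positivity)]
  have hgm : t ^ θ * α ^ (1 - θ) ≤ θ * t + (1 - θ) * α :=
    Real.geom_mean_le_arith_mean2_weighted hθ0 (by linarith) ht.le hα.le (by ring)
  have hkey : t ^ θ * α = (t ^ θ * α ^ (1 - θ)) * α ^ θ := by
    rw [mul_assoc, ← Real.rpow_add hα]; norm_num
  rw [hkey]
  have hαθ : (0:ℝ) ≤ α ^ θ := (Real.rpow_pos_of_pos hα θ).le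
  have h2 : θ * t + (1 - θ) * α ≤ t + α := by nlinarith
  calc (t ^ θ * α ^ (1 - θ)) * α ^ θ ≤ (θ * t + (1 - θ) * α) * α ^ θ := by
        exact mul_le_mul_of_nonneg_right hgm hαθ
    _ ≤ (t + α) * α ^ θ := by exact mul_le_mul_of_nonneg_right h2 hαθ
    _ = α ^ θ * (t + α) := by ring

private lemma aux2 (t α θ : ℝ) (ht : 0 < t) (hα : 0 < α) (hθ0 : 0 ≤ θ) (hθ1 : θ ≤ 1) :
    t ^ (1 - θ) / (t + α) ≤ α ^ (-θ) := by
  have hgm : t ^ (1 - θ) * α ^ θ ≤ (1 - θ) * t + θ * α :=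
    Real.geom_mean_le_arith_mean2_weighted (by linarith) hθ0 ht.le hα.le (by ring)
  have hαθ : (0:ℝ) < α ^ θ := Real.rpow_pos_of_pos hα θ
  rw [Real.rpow_neg hα.le, ← one_div, div_le_div_iff₀ (by positivity) hαθ]
  nlinarith

private lemma minkowski_sq (f g : ℕ → ℝ) (hf : ∀ k, 0 ≤ f k) (hg : ∀ k, 0 ≤ g k)
    (hf2 : Summable fun k => f k ^ 2) (hg2 : Summable fun k => g k ^ 2) :
    (Summable fun k => (f k + g k) ^ 2) ∧
      Real.sqrt (∑' k, (f k + g k) ^ 2) ≤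
        Real.sqrt (∑' k, f k ^ 2) + Real.sqrt (∑' k, g k ^ 2) := by
  have h2 : ∀ x : ℝ, x ^ (2:ℝ) = x ^ 2 := fun x => by
    rw [show (2:ℝ) = ((2:ℕ):ℝ) by norm_num, Real.rpow_natCast]
  have hf2' : Summable fun k => f k ^ (2:ℝ) := by simpa only [h2] using hf2
  have hg2' : Summable fun k => g k ^ (2:ℝ) := by simpa only [h2] using hg2
  obtain ⟨hs, hle⟩ := Real.Lp_add_le_tsum_of_nonneg (p := 2) (by norm_num) hf hg hf2' hg2'
  constructor
  · simpa only [h2] using hs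
  · have := hle
    simp only [h2] at this
    rw [Real.sqrt_eq_rpow, Real.sqrt_eq_rpow, Real.sqrt_eq_rpow]
    exact this


/-- (Error decomposition for higher-order Tikhonov regularization, diagonal
form.) With solution coefficients `a_k = σ_k^{2μ} w_k` (`∑ w_k² ≤ ρ²`), exact
data `y_k = σ_k a_k`, noisy data with `∑ (y^δ_k − y_k)² ≤ δ²`, and the
higher-order Tikhonov filter `(x_α^δ)_k = σ_k^{2κ+1} y^δ_k / (σ_k^{2κ+2} + α)`,
the reconstruction error satisfies
`‖x_α^δ − a‖_{ℓ²} ≤ ρ α^{μ/(κ+1)} + δ α^{−1/(2κ+2)}`. -/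
theorem higher_order_tikhonov_error_decomposition
    (σ : ℕ → ℝ)
    (hσ_anti : Antitone σ)
    (hσ_pos : ∀ k, 0 < σ k)
    (hσ_le : ∀ k, σ k ≤ 1)
    (hσ_lim : Filter.Tendsto σ Filter.atTop (nhds 0))
    (κ μ ρ δ α : ℝ) (hκ : 0 ≤ κ) (hμ0 : 0 ≤ μ) (hμ : μ ≤ κ + 1)
    (hρ : 0 ≤ ρ) (hδ : 0 ≤ δ) (hα : 0 < α)
    (w : ℕ → ℝ) (hw_sum : Summable fun k => (w k) ^ 2)
    (hw : (∑' k, (w k) ^ 2) ≤ ρ ^ 2)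
    (a y yδ : ℕ → ℝ)
    (ha : ∀ k, a k = σ k ^ (2 * μ) * w k)
    (hy : ∀ k, y k = σ k * a k)
    (hyδ_sum : Summable fun k => (yδ k) ^ 2)
    (hnoise_sum : Summable fun k => (yδ k - y k) ^ 2)
    (hnoise : (∑' k, (yδ k - y k) ^ 2) ≤ δ ^ 2)
    (xαδ : ℕ → ℝ)
    (hx : ∀ k, xαδ k = σ k ^ (2 * κ + 1) * yδ k / (σ k ^ (2 * κ + 2) + α)) :
    Real.sqrt (∑' k, (xαδ k - a k) ^ 2) ≤
      ρ * α ^ (μ / (κ + 1)) + δ * α ^ (-(1 / (2 * κ + 2))) := by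
  have hκ1 : (0:ℝ) < κ + 1 := by linarith
  have h2κ2 : (0:ℝ) < 2 * κ + 2 := by linarith
  set c1 : ℝ := α ^ (μ / (κ + 1)) with hc1
  set c2 : ℝ := α ^ (-(1 / (2 * κ + 2))) with hc2
  have hc1pos : 0 < c1 := Real.rpow_pos_of_pos hα _
  have hc2pos : 0 < c2 := Real.rpow_pos_of_pos hα _
  set f : ℕ → ℝ := fun k => c1 * |w k| with hf
  set g : ℕ → ℝ := fun k => c2 * |yδ k - y k| with hg
  -- pointwise bound
  have hpt : ∀ k, |xαδ k - a k| ≤ f k + g k := by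
    intro k
    have hspos := hσ_pos k
    have ht : 0 < σ k ^ (2 * κ + 2) := Real.rpow_pos_of_pos hspos _
    have htα : 0 < σ k ^ (2 * κ + 2) + α := by linarith
    have hPs : σ k ^ (2 * κ + 1) * σ k = σ k ^ (2 * κ + 2) := by
      have h := Real.rpow_add hspos (2 * κ + 1) 1
      rw [Real.rpow_one] at h
      rw [← h]; congr 1; ring
    have hyk : σ k ^ (2 * κ + 1) * y k
        = σ k ^ (2 * κ + 2) * (σ k ^ (2 * μ) * w k) := by
      rw [hy, ha, ← hPs]; ring
    have hid : xαδ k - a k =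
        (σ k ^ (2 * κ + 1) / (σ k ^ (2 * κ + 2) + α)) * (yδ k - y k)
          - (α * σ k ^ (2 * μ) / (σ k ^ (2 * κ + 2) + α)) * w k := by
      rw [hx, ha]
      field_simp
      linear_combination (norm := skip) hyk
      rw [show (2:ℝ) * (κ + 1) = 2 * κ + 2 by ring]; ring
    have hQ : σ k ^ (2 * μ) = (σ k ^ (2 * κ + 2)) ^ (μ / (κ + 1)) := by
      rw [← Real.rpow_mul hspos.le]
      congr 1
      field_simp
    have hP : σ k ^ (2 * κ + 1)
        = (σ k ^ (2 * κ + 2)) ^ (1 - 1 / (2 * κ + 2)) := by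
      rw [← Real.rpow_mul hspos.le]
      congr 1
      field_simp
      ring
    have hb1 : α * σ k ^ (2 * μ) / (σ k ^ (2 * κ + 2) + α) ≤ c1 := by
      rw [hQ, hc1]
      have h := aux1 (σ k ^ (2 * κ + 2)) α (μ / (κ + 1)) ht hα (by positivity)
        (by rw [div_le_one hκ1]; linarith)
      calc α * (σ k ^ (2 * κ + 2)) ^ (μ / (κ + 1)) / (σ k ^ (2 * κ + 2) + α)
          = (σ k ^ (2 * κ + 2)) ^ (μ / (κ + 1)) * α / (σ k ^ (2 * κ + 2) + α) := by
            ring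
        _ ≤ α ^ (μ / (κ + 1)) := h
    have hb2 : σ k ^ (2 * κ + 1) / (σ k ^ (2 * κ + 2) + α) ≤ c2 := by
      rw [hP, hc2]
      exact aux2 (σ k ^ (2 * κ + 2)) α (1 / (2 * κ + 2)) ht hα (by positivity)
        (by rw [div_le_one h2κ2]; linarith)
    have hnn1 : 0 ≤ α * σ k ^ (2 * μ) / (σ k ^ (2 * κ + 2) + α) := by positivity
    have hnn2 : 0 ≤ σ k ^ (2 * κ + 1) / (σ k ^ (2 * κ + 2) + α) := by positivity
    calc |xαδ k - a k|
        ≤ |(σ k ^ (2 * κ + 1) / (σ k ^ (2 * κ + 2) + α)) * (yδ k - y k)|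
          + |(α * σ k ^ (2 * μ) / (σ k ^ (2 * κ + 2) + α)) * w k| := by
          rw [hid]; exact abs_sub _ _
      _ = (σ k ^ (2 * κ + 1) / (σ k ^ (2 * κ + 2) + α)) * |yδ k - y k|
          + (α * σ k ^ (2 * μ) / (σ k ^ (2 * κ + 2) + α)) * |w k| := by
          rw [abs_mul, abs_mul, abs_of_nonneg hnn1, abs_of_nonneg hnn2]
      _ ≤ c2 * |yδ k - y k| + c1 * |w k| :=
          add_le_add (mul_le_mul_of_nonneg_right hb2 (abs_nonneg _))
            (mul_le_mul_of_nonneg_right hb1 (abs_nonneg _))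
      _ = f k + g k := by ring
  -- summability of f², g²
  have hf2 : Summable fun k => f k ^ 2 := by
    have : (fun k => f k ^ 2) = fun k => c1 ^ 2 * w k ^ 2 := by
      funext k; simp [hf, mul_pow, sq_abs]
    rw [this]; exact hw_sum.mul_left _
  have hg2 : Summable fun k => g k ^ 2 := by
    have : (fun k => g k ^ 2) = fun k => c2 ^ 2 * (yδ k - y k) ^ 2 := by
      funext k; simp [hg, mul_pow, sq_abs]
    rw [this]; exact hnoise_sum.mul_left _
  obtain ⟨hfg_sum, hfg_le⟩ := minkowski_sq f g (fun k => by positivity)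
    (fun k => by positivity) hf2 hg2
  have hsq_le : ∀ k, (xαδ k - a k) ^ 2 ≤ (f k + g k) ^ 2 := by
    intro k
    have h := hpt k
    have h0 := abs_nonneg (xαδ k - a k)
    nlinarith [sq_abs (xαδ k - a k)]
  have hxa_sum : Summable fun k => (xαδ k - a k) ^ 2 :=
    Summable.of_nonneg_of_le (fun k => sq_nonneg _) hsq_le hfg_sum
  have step1 : Real.sqrt (∑' k, (xαδ k - a k) ^ 2) ≤
      Real.sqrt (∑' k, (f k + g k) ^ 2) :=
    Real.sqrt_le_sqrt (Summable.tsum_le_tsum hsq_le hxa_sum hfg_sum)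
  have hfsum : Real.sqrt (∑' k, f k ^ 2) ≤ c1 * ρ := by
    have he : (∑' k, f k ^ 2) = c1 ^ 2 * ∑' k, w k ^ 2 := by
      rw [← tsum_mul_left]; congr 1; funext k; simp [hf, mul_pow, sq_abs]
    rw [he]
    calc Real.sqrt (c1 ^ 2 * ∑' k, w k ^ 2)
        ≤ Real.sqrt (c1 ^ 2 * ρ ^ 2) := by
          apply Real.sqrt_le_sqrt; nlinarith
      _ = c1 * ρ := by
          rw [← mul_pow, Real.sqrt_sq (by positivity)]
  have hgsum : Real.sqrt (∑' k, g k ^ 2) ≤ c2 * δ := by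
    have he : (∑' k, g k ^ 2) = c2 ^ 2 * ∑' k, (yδ k - y k) ^ 2 := by
      rw [← tsum_mul_left]; congr 1; funext k; simp [hg, mul_pow, sq_abs]
    rw [he]
    calc Real.sqrt (c2 ^ 2 * ∑' k, (yδ k - y k) ^ 2)
        ≤ Real.sqrt (c2 ^ 2 * δ ^ 2) := by
          apply Real.sqrt_le_sqrt; nlinarith
      _ = c2 * δ := by
          rw [← mul_pow, Real.sqrt_sq (by positivity)]
  calc Real.sqrt (∑' k, (xαδ k - a k) ^ 2)
      ≤ Real.sqrt (∑' k, (f k + g k) ^ 2) := step1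
    _ ≤ Real.sqrt (∑' k, f k ^ 2) + Real.sqrt (∑' k, g k ^ 2) := hfg_le
    _ ≤ c1 * ρ + c2 * δ := add_le_add hfsum hgsum
    _ = ρ * c1 + δ * c2 := by ring
end

section
/- (Order-optimal convergence rate for higher-order Tikhonov regularization with a-priori parameter choice, diagonal form.) Let κ ≥ 0 and 0 < μ ≤ κ + 1 be real numbers, ρ ≥ 0 and δ > 0. Let w : ℕ → ℝ satisfy ∑_k w_k² ≤ ρ², set a_k = σ_k^{2μ} w_k and exact data y_k = σ_k a_k, and let y^δ : ℕ → ℝ be square-summable with ∑_k (y^δ_k − y_k)² ≤ δ². Choose α = δ^{(2κ+2)/(2μ+1)} and define x_α^δ by (x_α^δ)_k = σ_k^{2κ+1} y^δ_k / (σ_k^{2κ+2} + α). Then (∑_k ((x_α^δ)_k − a_k)²)^{1/2} ≤ (ρ + 1) · δ^{2μ/(2μ+1)}. -/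
lemma young_aux {t b p : ℝ} (ht : 0 ≤ t) (hb : 0 < b) (hp : 0 ≤ p) (hp1 : p ≤ 1) :
    t ^ p * b ^ (1 - p) ≤ t + b := by
  have h := Real.geom_mean_le_arith_mean2_weighted (w₁ := p) (w₂ := 1 - p)
    (p₁ := t) (p₂ := b) hp (by linarith) ht hb.le (by ring)
  have h2 : p * t + (1 - p) * b ≤ t + b := by nlinarith
  linarith

lemma l2_triangle (u v : ℕ → ℝ) (hu : Summable fun k => u k ^ 2)
    (hv : Summable fun k => v k ^ 2) :
    Real.sqrt (∑' k, (u k + v k) ^ 2) ≤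
      Real.sqrt (∑' k, u k ^ 2) + Real.sqrt (∑' k, v k ^ 2) := by
  have habs : ∀ x : ℝ, |x| ^ (2:ℝ) = x ^ 2 := fun x => by
    rw [show (2:ℝ) = ((2:ℕ):ℝ) by norm_num, Real.rpow_natCast, sq_abs]
  have hu' : Summable fun k => |u k| ^ (2:ℝ) := by simpa only [habs] using hu
  have hv' : Summable fun k => |v k| ^ (2:ℝ) := by simpa only [habs] using hv
  obtain ⟨hsum, hineq⟩ := Real.Lp_add_le_tsum_of_nonneg (f := fun k => |u k|)
    (g := fun k => |v k|) (p := 2) one_le_two (fun k => abs_nonneg _)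
    (fun k => abs_nonneg _) hu' hv'
  have hadd : ∀ x : ℕ, (|u x| + |v x|) ^ (2:ℝ) = (|u x| + |v x|) ^ 2 := fun x => by
    rw [show (2:ℝ) = ((2:ℕ):ℝ) by norm_num, Real.rpow_natCast]
  have hsum2 : Summable fun k => (|u k| + |v k|) ^ 2 := by simpa only [hadd] using hsum
  have hpt : ∀ k, (u k + v k) ^ 2 ≤ (|u k| + |v k|) ^ 2 := fun k => by
    have : |u k + v k| ≤ |u k| + |v k| := abs_add_le _ _
    nlinarith [abs_nonneg (u k + v k), sq_abs (u k + v k)]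
  have hsum1 : Summable fun k => (u k + v k) ^ 2 :=
    Summable.of_nonneg_of_le (fun k => sq_nonneg _) hpt hsum2
  calc Real.sqrt (∑' k, (u k + v k) ^ 2)
      ≤ Real.sqrt (∑' k, (|u k| + |v k|) ^ 2) :=
        Real.sqrt_le_sqrt (Summable.tsum_le_tsum hpt hsum1 hsum2)
    _ = (∑' k, (|u k| + |v k|) ^ (2:ℝ)) ^ (1/2 : ℝ) := by
        rw [Real.sqrt_eq_rpow]; congr 1; exact tsum_congr fun k => (hadd k).symm
    _ ≤ (∑' k, |u k| ^ (2:ℝ)) ^ (1/2:ℝ) + (∑' k, |v k| ^ (2:ℝ)) ^ (1/2:ℝ) := hineq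
    _ = Real.sqrt (∑' k, u k ^ 2) + Real.sqrt (∑' k, v k ^ 2) := by
        rw [Real.sqrt_eq_rpow, Real.sqrt_eq_rpow]
        congr 1 <;> [skip; skip] <;> congr 1 <;> exact tsum_congr fun k => habs _

/-- (Order-optimal convergence rate for higher-order Tikhonov regularization
with a-priori parameter choice, diagonal form.) With solution coefficients
`a_k = σ_k^{2μ} w_k` (`∑ w_k² ≤ ρ²`), exact data `y_k = σ_k a_k`, noisy data
with `∑ (y^δ_k − y_k)² ≤ δ²`, the a-priori choice `α = δ^{(2κ+2)/(2μ+1)}`, and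
the higher-order Tikhonov filter `(x_α^δ)_k = σ_k^{2κ+1} y^δ_k / (σ_k^{2κ+2} + α)`,
the reconstruction error satisfies `‖x_α^δ − a‖_{ℓ²} ≤ (ρ + 1) δ^{2μ/(2μ+1)}`. -/
theorem higher_order_tikhonov_order_optimal_rate
    (σ : ℕ → ℝ)
    (hσ_anti : Antitone σ)
    (hσ_pos : ∀ k, 0 < σ k)
    (hσ_le : ∀ k, σ k ≤ 1)
    (hσ_lim : Filter.Tendsto σ Filter.atTop (nhds 0))
    (κ μ ρ δ : ℝ) (hκ : 0 ≤ κ) (hμ0 : 0 < μ) (hμ : μ ≤ κ + 1)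
    (hρ : 0 ≤ ρ) (hδ : 0 < δ)
    (w : ℕ → ℝ) (hw_sum : Summable fun k => (w k) ^ 2)
    (hw : (∑' k, (w k) ^ 2) ≤ ρ ^ 2)
    (a y yδ : ℕ → ℝ)
    (ha : ∀ k, a k = σ k ^ (2 * μ) * w k)
    (hy : ∀ k, y k = σ k * a k)
    (hyδ_sum : Summable fun k => (yδ k) ^ 2)
    (hnoise_sum : Summable fun k => (yδ k - y k) ^ 2)
    (hnoise : (∑' k, (yδ k - y k) ^ 2) ≤ δ ^ 2)
    (α : ℝ) (hαdef : α = δ ^ ((2 * κ + 2) / (2 * μ + 1)))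
    (xαδ : ℕ → ℝ)
    (hx : ∀ k, xαδ k = σ k ^ (2 * κ + 1) * yδ k / (σ k ^ (2 * κ + 2) + α)) :
    Real.sqrt (∑' k, (xαδ k - a k) ^ 2) ≤ (ρ + 1) * δ ^ (2 * μ / (2 * μ + 1)) := by
  have hα : 0 < α := hαdef ▸ Real.rpow_pos_of_pos hδ _
  have hκ2 : (0:ℝ) < 2 * κ + 2 := by linarith
  have hμ2 : (0:ℝ) < 2 * μ + 1 := by linarith
  set r := δ ^ (2 * μ / (2 * μ + 1)) with hr_def
  have hr : 0 < r := Real.rpow_pos_of_pos hδ _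
  set c := α ^ (-(1 / (2 * κ + 2))) with hc_def
  have hc : 0 < c := Real.rpow_pos_of_pos hα _
  have hD : ∀ k, 0 < σ k ^ (2 * κ + 2) + α := fun k =>
    add_pos (Real.rpow_pos_of_pos (hσ_pos k) _) hα
  set u : ℕ → ℝ := fun k => σ k ^ (2 * κ + 1) * (yδ k - y k) / (σ k ^ (2 * κ + 2) + α)
    with hu_def
  set v : ℕ → ℝ := fun k => -(α * σ k ^ (2 * μ) * w k / (σ k ^ (2 * κ + 2) + α)) with hv_def
  -- decomposition
  have hdecomp : ∀ k, xαδ k - a k = u k + v k := by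
    intro k
    have hσk := hσ_pos k
    have hDk := (hD k).ne'
    have hpow : σ k ^ (2 * κ + 1) * (σ k * σ k ^ (2 * μ)) =
        σ k ^ (2 * μ) * σ k ^ (2 * κ + 2) := by
      nth_rewrite 2 [← Real.rpow_one (σ k)]
      rw [← Real.rpow_add hσk, ← Real.rpow_add hσk, ← Real.rpow_add hσk]
      ring_nf
    simp only [hu_def, hv_def, hx, hy, ha]
    field_simp
    rw [show (2:ℝ) * (κ + 1) = 2 * κ + 2 by ring]
    linear_combination (w k) * hpow
  -- filter bound for the noise part
  have hub_u : ∀ k, σ k ^ (2 * κ + 1) / (σ k ^ (2 * κ + 2) + α) ≤ c := by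
    intro k
    have hσk := hσ_pos k
    set p : ℝ := (2 * κ + 1) / (2 * κ + 2) with hp_def
    have hp0 : 0 ≤ p := by positivity
    have hp1 : p ≤ 1 := by rw [hp_def, div_le_one hκ2]; linarith
    have h1 : (σ k ^ (2 * κ + 2) : ℝ) ^ p = σ k ^ (2 * κ + 1) := by
      rw [← Real.rpow_mul hσk.le]; congr 1; rw [hp_def]; field_simp
    have hy2 := young_aux (t := σ k ^ (2 * κ + 2)) (b := α)
      (Real.rpow_pos_of_pos hσk _).le hα hp0 hp1
    rw [h1] at hy2
    -- σ^(2κ+1) * α^(1-p) ≤ D, and c = α^(p-1)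
    have hcp : c = α ^ (p - 1) := by
      rw [hc_def]; congr 1; rw [hp_def]; field_simp; ring
    rw [div_le_iff₀ (hD k), hcp]
    have hmul : α ^ (p - 1) * α ^ (1 - p) = 1 := by
      rw [← Real.rpow_add hα]; norm_num
    calc σ k ^ (2 * κ + 1) = σ k ^ (2 * κ + 1) * (α ^ (1 - p) * α ^ (p - 1)) := by
          rw [mul_comm (α ^ (1 - p)), hmul, mul_one]
      _ = (σ k ^ (2 * κ + 1) * α ^ (1 - p)) * α ^ (p - 1) := by ring
      _ ≤ (σ k ^ (2 * κ + 2) + α) * α ^ (p - 1) := by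
          have := (Real.rpow_pos_of_pos hα (p - 1)).le
          exact mul_le_mul_of_nonneg_right hy2 this
      _ = α ^ (p - 1) * (σ k ^ (2 * κ + 2) + α) := by ring
  -- filter bound for the approximation part
  have hub_v : ∀ k, α * σ k ^ (2 * μ) / (σ k ^ (2 * κ + 2) + α) ≤ r := by
    intro k
    have hσk := hσ_pos k
    set q : ℝ := 2 * μ / (2 * κ + 2) with hq_def
    have hq0 : 0 ≤ q := by positivity
    have hq1 : q ≤ 1 := by rw [hq_def, div_le_one hκ2]; linarith
    have h1 : (σ k ^ (2 * κ + 2) : ℝ) ^ q = σ k ^ (2 * μ) := by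
      rw [← Real.rpow_mul hσk.le]; congr 1; rw [hq_def]; field_simp
    have hy2 := young_aux (t := σ k ^ (2 * κ + 2)) (b := α)
      (Real.rpow_pos_of_pos hσk _).le hα hq0 hq1
    rw [h1] at hy2
    have hαr : α ^ q = r := by
      rw [hαdef, hr_def, ← Real.rpow_mul hδ.le]; congr 1
      rw [hq_def]; field_simp
    rw [div_le_iff₀ (hD k), ← hαr]
    have hαsplit : α ^ q * α ^ (1 - q) = α := by
      rw [← Real.rpow_add hα, show q + (1 - q) = 1 by ring, Real.rpow_one]
    calc α * σ k ^ (2 * μ) = α ^ q * (σ k ^ (2 * μ) * α ^ (1 - q)) := by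
          linear_combination (-(σ k ^ (2 * μ))) * hαsplit
      _ ≤ α ^ q * (σ k ^ (2 * κ + 2) + α) :=
          mul_le_mul_of_nonneg_left hy2 (Real.rpow_pos_of_pos hα q).le
  -- pointwise square bounds
  have hu_pt : ∀ k, u k ^ 2 ≤ c ^ 2 * (yδ k - y k) ^ 2 := by
    intro k
    have hnn : 0 ≤ σ k ^ (2 * κ + 1) / (σ k ^ (2 * κ + 2) + α) :=
      div_nonneg (Real.rpow_pos_of_pos (hσ_pos k) _).le (hD k).le
    have habs : |u k| ≤ c * |yδ k - y k| := by
      have hrepr : u k = (σ k ^ (2 * κ + 1) / (σ k ^ (2 * κ + 2) + α)) * (yδ k - y k) := by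
        simp only [hu_def]; ring
      rw [hrepr, abs_mul, abs_of_nonneg hnn]
      exact mul_le_mul_of_nonneg_right (hub_u k) (abs_nonneg _)
    calc u k ^ 2 = |u k| ^ 2 := (sq_abs _).symm
      _ ≤ (c * |yδ k - y k|) ^ 2 := by
          apply pow_le_pow_left₀ (abs_nonneg _) habs
      _ = c ^ 2 * (yδ k - y k) ^ 2 := by rw [mul_pow, sq_abs]
  have hv_pt : ∀ k, v k ^ 2 ≤ r ^ 2 * w k ^ 2 := by
    intro k
    have habs : |v k| ≤ r * |w k| := by
      have hnn : 0 ≤ α * σ k ^ (2 * μ) / (σ k ^ (2 * κ + 2) + α) :=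
        div_nonneg (mul_nonneg hα.le (Real.rpow_pos_of_pos (hσ_pos k) _).le) (hD k).le
      have hrepr : v k = (α * σ k ^ (2 * μ) / (σ k ^ (2 * κ + 2) + α)) * (-(w k)) := by
        simp only [hv_def]; ring
      rw [hrepr, abs_mul, abs_neg, abs_of_nonneg hnn]
      exact mul_le_mul_of_nonneg_right (hub_v k) (abs_nonneg _)
    calc v k ^ 2 = |v k| ^ 2 := (sq_abs _).symm
      _ ≤ (r * |w k|) ^ 2 := by apply pow_le_pow_left₀ (abs_nonneg _) habs
      _ = r ^ 2 * w k ^ 2 := by rw [mul_pow, sq_abs]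
  -- summability
  have hu_sum : Summable fun k => u k ^ 2 :=
    Summable.of_nonneg_of_le (fun k => sq_nonneg _) hu_pt (hnoise_sum.mul_left _)
  have hv_sum : Summable fun k => v k ^ 2 :=
    Summable.of_nonneg_of_le (fun k => sq_nonneg _) hv_pt (hw_sum.mul_left _)
  -- tsum bounds
  have hu_tsum : Real.sqrt (∑' k, u k ^ 2) ≤ c * δ := by
    have h1 : (∑' k, u k ^ 2) ≤ c ^ 2 * δ ^ 2 := by
      calc (∑' k, u k ^ 2) ≤ ∑' k, c ^ 2 * (yδ k - y k) ^ 2 :=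
            Summable.tsum_le_tsum hu_pt hu_sum (hnoise_sum.mul_left _)
        _ = c ^ 2 * ∑' k, (yδ k - y k) ^ 2 := tsum_mul_left
        _ ≤ c ^ 2 * δ ^ 2 := by nlinarith [sq_nonneg c]
    calc Real.sqrt (∑' k, u k ^ 2) ≤ Real.sqrt (c ^ 2 * δ ^ 2) := Real.sqrt_le_sqrt h1
      _ = c * δ := by
          rw [show c ^ 2 * δ ^ 2 = (c * δ) ^ 2 by ring,
            Real.sqrt_sq (by positivity)]
  have hv_tsum : Real.sqrt (∑' k, v k ^ 2) ≤ r * ρ := by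
    have h1 : (∑' k, v k ^ 2) ≤ r ^ 2 * ρ ^ 2 := by
      calc (∑' k, v k ^ 2) ≤ ∑' k, r ^ 2 * w k ^ 2 :=
            Summable.tsum_le_tsum hv_pt hv_sum (hw_sum.mul_left _)
        _ = r ^ 2 * ∑' k, w k ^ 2 := tsum_mul_left
        _ ≤ r ^ 2 * ρ ^ 2 := by nlinarith [sq_nonneg r]
    calc Real.sqrt (∑' k, v k ^ 2) ≤ Real.sqrt (r ^ 2 * ρ ^ 2) := Real.sqrt_le_sqrt h1
      _ = r * ρ := by
          rw [show r ^ 2 * ρ ^ 2 = (r * ρ) ^ 2 by ring,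
            Real.sqrt_sq (by positivity)]
  -- cδ = r
  have hcδ : c * δ = r := by
    rw [hc_def, hαdef, hr_def, ← Real.rpow_mul hδ.le]
    nth_rewrite 2 [show δ = δ ^ (1:ℝ) by rw [Real.rpow_one]]
    rw [← Real.rpow_add hδ]
    congr 1
    field_simp
    ring
  -- combine
  have htri := l2_triangle u v hu_sum hv_sum
  have heq : (∑' k, (xαδ k - a k) ^ 2) = ∑' k, (u k + v k) ^ 2 :=
    tsum_congr fun k => by rw [hdecomp k]
  rw [heq]
  calc Real.sqrt (∑' k, (u k + v k) ^ 2)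
      ≤ Real.sqrt (∑' k, u k ^ 2) + Real.sqrt (∑' k, v k ^ 2) := htri
    _ ≤ c * δ + r * ρ := add_le_add hu_tsum hv_tsum
    _ = (ρ + 1) * r := by rw [hcδ]; ring
end
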